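/- On the 5×5 Hex board, the set {(1,1),(1,2),(1,3),(1,4),(2,4),(3,3),(4,2),(5,2),(5,3),(5,4),(5,5)} is a winning path of length 11, and no winning path on the 5×5 board has length greater than 11. -/

import Mathlib

/-- Hex adjacency on integer coordinates. -/
def HexAdj (a b : ℤ × ℤ) : Prop :=
  (b.1 - a.1, b.2 - a.2) ∈
    ({(1,0), (-1,0), (0,1), (0,-1), (1,-1), (-1,1)} : Set (ℤ × ℤ))

/-- Cell of the n×n Hex board. -/
def OnBoard (n : ℕ) (a : ℤ × ℤ) : Prop :=
  1 ≤ a.1 ∧ a.1 ≤ (n : ℤ) ∧ 1 ≤ a.2 ∧ a.2 ≤ (n : ℤ)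

/-- A winning connection for Black: a set of board cells containing a chain of
pairwise-adjacent cells from a cell in the top row (y = 1) to a cell in the
bottom row (y = n). -/
def IsWinningConnection (n : ℕ) (S : Finset (ℤ × ℤ)) : Prop :=
  (∀ c ∈ S, OnBoard n c) ∧
  ∃ p : List (ℤ × ℤ), ∃ hp : p ≠ [],
    (∀ c ∈ p, c ∈ S) ∧ List.Chain' HexAdj p ∧
    (p.head hp).2 = 1 ∧ (p.getLast hp).2 = (n : ℤ)

/-- A winning path: a minimal winning connection. -/
def IsWinningPath (n : ℕ) (S : Finset (ℤ × ℤ)) : Prop :=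
  IsWinningConnection n S ∧ ∀ T ⊂ S, ¬ IsWinningConnection n T

def path5 : Finset (ℤ × ℤ) :=
  {(1,1),(1,2),(1,3),(1,4),(2,4),(3,3),(4,2),(5,2),(5,3),(5,4),(5,5)}

/-!
A winning path `T` is, by minimality, exactly the cell set of any shortest top-to-bottom chain
inside it. Such a chain repeats no cell, meets the top row only at its start and the bottom row
only at its end, and is induced: two of its cells that are not consecutive are never adjacent,
since otherwise a shortcut would give a shorter chain. An exhaustive depth-first search over
chains with these properties on the 5×5 board shows they have at most 11 cells.
Conversely, `path5` is minimal because deleting any of its cells `c` leaves the cells before `c`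
as a set that contains all remaining top-row cells, is closed under adjacency, and misses the
bottom row.
-/

section Crossing

variable {α : Type*} {r : α → α → Prop} {S : Set α} {P Q : α → Prop} {p : List α}

theorem List.exists_eq_append_cons_append_cons_of_not_nodup {l : List α} (h : ¬ l.Nodup) :
    ∃ a l₁ m l₂, l = l₁ ++ a :: m ++ a :: l₂ := by
  induction l with
  | nil => exact absurd List.nodup_nil h
  | cons x l ih =>
    by_cases hx : x ∈ l
    · obtain ⟨m, l₂, rfl⟩ := List.append_of_mem hx
      exact ⟨x, [], m, l₂, by simp⟩
    · obtain ⟨a, l₁, m, l₂, rfl⟩ := ih fun hl => h (List.nodup_cons.2 ⟨hx, hl⟩)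
      exact ⟨a, x :: l₁, m, l₂, rfl⟩

def IsCrossing (r : α → α → Prop) (S : Set α) (P Q : α → Prop) (l : List α) : Prop :=
  (∀ c ∈ l, c ∈ S) ∧ l.IsChain r ∧ (∃ a ∈ l.head?, P a) ∧ ∃ b ∈ l.getLast?, Q b

def IsInduced (r : α → α → Prop) (l : List α) : Prop :=
  ∀ a b m, a :: m ++ [b] <:+: l → m ≠ [] → ¬ r a b

theorem IsCrossing.ne_nil (h : IsCrossing r S P Q p) : p ≠ [] := by
  rintro rfl
  simpa using h.2.2.1

theorem IsCrossing.mono {T : Set α} (h : IsCrossing r S P Q p) (hST : S ⊆ T) :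
    IsCrossing r T P Q p :=
  ⟨fun c hc => hST (h.1 c hc), h.2⟩

theorem not_isCrossing_of_closed (R : Set α) (hP : ∀ a ∈ S, P a → a ∈ R)
    (hR : ∀ a ∈ R, ∀ b ∈ S, r a b → b ∈ R) (hQ : ∀ b ∈ R, ¬ Q b) (p : List α) :
    ¬ IsCrossing r S P Q p := by
  rintro ⟨hS, hchain, ⟨a, ha, hPa⟩, ⟨b, hb, hQb⟩⟩
  have hmem : ∀ c ∈ p, c ∈ R := by
    refine (List.IsChain.iff_mem.1 hchain).induction _ _
      (fun x y ⟨_, hy, hxy⟩ hx => hR x hx y (hS y hy) hxy) fun hne => ?_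
    have hhead : p.head hne = a := by simpa [List.head?_eq_some_head hne] using ha
    exact hhead ▸ hP a (hS a (List.mem_of_mem_head? ha)) hPa
  exact hQ b (hmem b (List.mem_of_getLast? hb)) hQb

theorem IsCrossing.splice {l₁ m l₂ : List α} {a : α}
    (h : IsCrossing r S P Q (l₁ ++ a :: m ++ a :: l₂)) : IsCrossing r S P Q (l₁ ++ a :: l₂) := by
  obtain ⟨hS, hchain, hP, hQ⟩ := h
  rw [List.getLast?_append_of_ne_nil _ (List.cons_ne_nil _ _)] at hQ
  refine ⟨fun c hc => hS c (by simp at hc ⊢; tauto), ?_, by simpa using hP, by simpa using hQ⟩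
  have h₁ : (l₁ ++ [a]).IsChain r := hchain.prefix ⟨m ++ a :: l₂, by simp⟩
  have h₂ : ([a] ++ l₂).IsChain r := hchain.suffix ⟨l₁ ++ a :: m, by simp⟩
  simpa using h₁.append_overlap h₂ (by simp)

theorem IsCrossing.shortcut {l₁ m l₂ : List α} {a b : α}
    (h : IsCrossing r S P Q (l₁ ++ a :: m ++ b :: l₂)) (hab : r a b) :
    IsCrossing r S P Q (l₁ ++ a :: b :: l₂) := by
  obtain ⟨hS, hchain, hP, hQ⟩ := h
  rw [List.getLast?_append_of_ne_nil _ (List.cons_ne_nil _ _)] at hQ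
  refine ⟨fun c hc => hS c (by simp at hc ⊢; tauto), ?_, by simpa using hP, by simpa using hQ⟩
  have h₁ : (l₁ ++ [a]).IsChain r := hchain.prefix ⟨m ++ b :: l₂, by simp⟩
  have h₂ : ([a] ++ b :: l₂).IsChain r :=
    List.isChain_cons_cons.2 ⟨hab, hchain.suffix ⟨l₁ ++ a :: m, by simp⟩⟩
  simpa using h₁.append_overlap h₂ (by simp)

theorem IsCrossing.suffix_of_start {l₁ l₂ : List α} {b : α}
    (h : IsCrossing r S P Q (l₁ ++ b :: l₂)) (hb : P b) : IsCrossing r S P Q (b :: l₂) := by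
  obtain ⟨hS, hchain, -, hQ⟩ := h
  exact ⟨fun c hc => hS c (by simp at hc ⊢; tauto), hchain.suffix ⟨l₁, rfl⟩, ⟨b, rfl, hb⟩,
    by simpa using hQ⟩

theorem IsCrossing.prefix_of_end {l₁ l₂ : List α} {b : α}
    (h : IsCrossing r S P Q (l₁ ++ b :: l₂)) (hb : Q b) : IsCrossing r S P Q (l₁ ++ [b]) := by
  obtain ⟨hS, hchain, hP, -⟩ := h
  exact ⟨fun c hc => hS c (by simp at hc ⊢; tauto), hchain.prefix ⟨l₂, by simp⟩,
    by simpa using hP, ⟨b, by simp, hb⟩⟩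

def IsShortestCrossing (r : α → α → Prop) (S : Set α) (P Q : α → Prop) (p : List α) : Prop :=
  IsCrossing r S P Q p ∧ ∀ q, IsCrossing r S P Q q → p.length ≤ q.length

theorem exists_isShortestCrossing (h : ∃ q, IsCrossing r S P Q q) :
    ∃ p, IsShortestCrossing r S P Q p := by
  obtain ⟨p, hp, hmin⟩ := (measure List.length).wf.has_min {q | IsCrossing r S P Q q} h
  exact ⟨p, hp, fun q hq => not_lt.1 (hmin q hq)⟩

theorem IsShortestCrossing.nodup (h : IsShortestCrossing r S P Q p) : p.Nodup := by
  by_contra hp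
  obtain ⟨a, l₁, m, l₂, rfl⟩ := List.exists_eq_append_cons_append_cons_of_not_nodup hp
  have := h.2 _ h.1.splice
  simp at this
  omega

theorem IsShortestCrossing.not_start_of_mem_tail (h : IsShortestCrossing r S P Q p) :
    ∀ b ∈ p.tail, ¬ P b := by
  intro b hb hPb
  obtain ⟨a, l, rfl⟩ := List.exists_cons_of_ne_nil h.1.ne_nil
  obtain ⟨l₁, l₂, rfl⟩ := List.append_of_mem hb
  have := h.2 _ (IsCrossing.suffix_of_start (l₁ := a :: l₁) h.1 hPb)
  simp at this
  omega

theorem IsShortestCrossing.not_end_of_mem_dropLast (h : IsShortestCrossing r S P Q p) :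
    ∀ b ∈ p.dropLast, ¬ Q b := by
  intro b hb hQb
  obtain ⟨l, z, rfl⟩ := (List.eq_nil_or_concat p).resolve_left h.1.ne_nil
  obtain ⟨l₁, l₂, rfl⟩ := List.append_of_mem (by simpa using hb)
  have := h.2 _ (IsCrossing.prefix_of_end (l₂ := l₂ ++ [z]) (by simpa using h.1) hQb)
  simp at this

theorem IsShortestCrossing.isInduced (h : IsShortestCrossing r S P Q p) : IsInduced r p := by
  rintro a b m ⟨l₁, l₂, rfl⟩ hm hab
  have hp : l₁ ++ (a :: m ++ [b]) ++ l₂ = l₁ ++ a :: m ++ b :: l₂ := by simp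
  rw [hp] at h
  have := h.2 _ (h.1.shortcut hab)
  obtain ⟨x, m, rfl⟩ := List.exists_cons_of_ne_nil hm
  simp at this
  omega

end Crossing

def hexNeighbors (c : ℤ × ℤ) : List (ℤ × ℤ) :=
  [(c.1 + 1, c.2), (c.1 - 1, c.2), (c.1, c.2 + 1), (c.1, c.2 - 1), (c.1 + 1, c.2 - 1),
    (c.1 - 1, c.2 + 1)]

theorem hexAdj_iff_mem_hexNeighbors {a b : ℤ × ℤ} : HexAdj a b ↔ b ∈ hexNeighbors a := by
  obtain ⟨x, y⟩ := a
  obtain ⟨x', y'⟩ := b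
  simp only [HexAdj, hexNeighbors, Set.mem_insert_iff, Set.mem_singleton_iff, List.mem_cons,
    List.not_mem_nil, Prod.mk.injEq, or_false]
  omega

instance : DecidableRel HexAdj := fun _ _ => decidable_of_iff' _ hexAdj_iff_mem_hexNeighbors

instance (n : ℕ) : DecidablePred (OnBoard n) := fun _ => inferInstanceAs (Decidable (_ ∧ _))

theorem isWinningConnection_iff {n : ℕ} {S : Finset (ℤ × ℤ)} :
    IsWinningConnection n S ↔
      (∀ c ∈ S, OnBoard n c) ∧ ∃ p, IsCrossing HexAdj S (·.2 = 1) (·.2 = n) p := by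
  refine and_congr_right fun _ => ⟨?_, ?_⟩
  · rintro ⟨p, hp, hS, hchain, hhead, hlast⟩
    exact ⟨p, hS, hchain, ⟨_, List.head?_eq_some_head hp, hhead⟩,
      ⟨_, List.getLast?_eq_some_getLast hp, hlast⟩⟩
  · rintro ⟨p, hS, hchain, ⟨a, ha, hhead⟩, ⟨b, hb, hlast⟩⟩
    have hp : p ≠ [] := by rintro rfl; simp at ha
    refine ⟨p, hp, hS, hchain, ?_, ?_⟩
    · have : p.head hp = a := by simpa [List.head?_eq_some_head hp] using ha
      exact this ▸ hhead
    · have : p.getLast hp = b := by simpa [List.getLast?_eq_some_getLast hp] using hb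
      exact this ▸ hlast

theorem IsWinningPath.eq_toFinset {n : ℕ} {T : Finset (ℤ × ℤ)} (hT : IsWinningPath n T)
    {p : List (ℤ × ℤ)} (hp : IsCrossing HexAdj T (·.2 = 1) (·.2 = n) p) : T = p.toFinset := by
  have hsub : p.toFinset ⊆ T := fun c hc => hp.1 c (List.mem_toFinset.1 hc)
  by_contra hne
  refine hT.2 _ (hsub.ssubset_of_ne (Ne.symm hne)) (isWinningConnection_iff.2 ⟨?_, p, ?_⟩)
  · exact fun c hc => (isWinningConnection_iff.1 hT.1).1 c (hsub hc)
  · exact ⟨fun c hc => List.mem_toFinset.2 hc, hp.2⟩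

-- Depth-first search over the chains that can occur as shortest crossings: every new cell lies
-- on the board, off the top row, and is neither equal nor adjacent to an earlier cell other than
-- the current one; the search stops at the bottom row. `k` is fuel.
def extensionCandidates (n : ℕ) (visited : List (ℤ × ℤ)) (c : ℤ × ℤ) : List (ℤ × ℤ) :=
  if c.2 = n then [] else
    (hexNeighbors c).filter fun b => OnBoard n b ∧ b.2 ≠ 1 ∧ ∀ v ∈ visited, v ≠ b ∧ ¬ HexAdj v b

def maxExtension (n : ℕ) : ℕ → List (ℤ × ℤ) → ℤ × ℤ → ℕ
  | 0, _, _ => 0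
  | k + 1, visited, c =>
    ((extensionCandidates n visited c).map fun b => maxExtension n k (c :: visited) b + 1).foldr
      max 0

theorem min_length_le_maxExtension {n : ℕ} :
    ∀ (k : ℕ) (visited : List (ℤ × ℤ)) (c : ℤ × ℤ) (rest : List (ℤ × ℤ)),
      (c :: rest).IsChain HexAdj → IsInduced HexAdj (c :: rest) → (c :: rest).Nodup →
      (∀ b ∈ rest, OnBoard n b ∧ b.2 ≠ 1) → (∀ b ∈ (c :: rest).dropLast, b.2 ≠ n) →
      (∀ v ∈ visited, ∀ b ∈ rest, v ≠ b ∧ ¬ HexAdj v b) →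
      min rest.length k ≤ maxExtension n k visited c
  | 0, _, _, _, _, _, _, _, _, _ => by simp
  | _, _, _, [], _, _, _, _, _, _ => by simp
  | k + 1, visited, c, b :: rest, hchain, hind, hnodup, hboard, hlast, hvisited => by
    have hcb : b ∈ extensionCandidates n visited c := by
      have hc : c.2 ≠ n := hlast c (by simp)
      simp only [extensionCandidates, if_neg hc, List.mem_filter, decide_eq_true_eq,
        ← hexAdj_iff_mem_hexNeighbors]
      exact ⟨(List.isChain_cons_cons.1 hchain).1, (hboard b (by simp)).1, (hboard b (by simp)).2,
        fun v hv => hvisited v hv b (by simp)⟩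
    have ih := min_length_le_maxExtension k (c :: visited) b rest
      (List.isChain_cons_cons.1 hchain).2
      (fun x y m hinf => hind x y m (List.infix_cons hinf))
      (List.nodup_cons.1 hnodup).2 (fun x hx => hboard x (by simp [hx]))
      (fun x hx => hlast x (by simp_all)) ?_
    · calc min (b :: rest).length (k + 1) = min rest.length k + 1 := Nat.add_min_add_right _ _ 1
        _ ≤ maxExtension n k (c :: visited) b + 1 := Nat.add_le_add_right ih 1
        _ ≤ maxExtension n (k + 1) visited c :=
          List.le_max_of_le' 0 (List.mem_map_of_mem hcb) le_rfl
    · intro v hv x hx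
      rcases List.mem_cons.1 hv with rfl | hv
      · refine ⟨fun hvx => (List.nodup_cons.1 hnodup).1 (by simp [hvx, hx]), ?_⟩
        obtain ⟨s, t, rfl⟩ := List.append_of_mem hx
        exact hind v x (b :: s) ⟨[], t, by simp⟩ (by simp)
      · exact hvisited v hv x (by simp [hx])

theorem IsWinningPath.card_le {n m : ℕ} {T : Finset (ℤ × ℤ)}
    (hbound : ∀ c, OnBoard n c → c.2 = 1 → maxExtension n m [] c < m) (hT : IsWinningPath n T) :
    T.card ≤ m := by
  obtain ⟨hboard, hcross⟩ := isWinningConnection_iff.1 hT.1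
  obtain ⟨p, hp⟩ := exists_isShortestCrossing hcross
  rw [hT.eq_toFinset hp.1, List.toFinset_card_of_nodup hp.nodup]
  obtain ⟨c, rest, rfl⟩ := List.exists_cons_of_ne_nil hp.1.ne_nil
  have hc : c.2 = 1 := by simpa using hp.1.2.2.1
  have hrest := min_length_le_maxExtension m [] c rest hp.1.2.1 hp.isInduced hp.nodup
    (fun b hb => ⟨hboard b (hp.1.1 b (by simp [hb])), hp.not_start_of_mem_tail b hb⟩)
    hp.not_end_of_mem_dropLast (by simp)
  have := hbound c (hboard c (hp.1.1 c (by simp))) hc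
  simp only [List.length_cons]
  omega

theorem maxExtension_five_lt (c : ℤ × ℤ) (hc : OnBoard 5 c) (hc1 : c.2 = 1) :
    maxExtension 5 11 [] c < 11 := by
  obtain ⟨x, y⟩ := c
  obtain ⟨hx1, hx5, -, -⟩ := hc
  obtain rfl : y = 1 := hc1
  simp only [Nat.cast_ofNat] at hx5
  interval_cases x <;> decide

def path5Chain : List (ℤ × ℤ) :=
  [(1,1), (1,2), (1,3), (1,4), (2,4), (3,3), (4,2), (5,2), (5,3), (5,4), (5,5)]

theorem path5_eq_toFinset : path5 = path5Chain.toFinset := by decide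

theorem isCrossing_path5Chain : IsCrossing HexAdj path5 (·.2 = 1) (·.2 = 5) path5Chain :=
  ⟨fun c hc => Finset.mem_coe.2 (path5_eq_toFinset ▸ List.mem_toFinset.2 hc), by decide,
    ⟨_, rfl, rfl⟩, ⟨_, rfl, rfl⟩⟩

theorem path5Chain_takeWhile_separates : ∀ c ∈ path5Chain,
    (∀ a ∈ path5Chain, a ≠ c → a.2 = 1 → a ∈ path5Chain.takeWhile (· ≠ c)) ∧
    (∀ a ∈ path5Chain.takeWhile (· ≠ c), ∀ b ∈ path5Chain, b ≠ c → HexAdj a b →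
      b ∈ path5Chain.takeWhile (· ≠ c)) ∧
    ∀ b ∈ path5Chain.takeWhile (· ≠ c), b.2 ≠ 5 := by
  decide

theorem path5_minimal : ∀ T ⊂ path5, ¬ IsWinningConnection 5 T := by
  intro T hT hwin
  obtain ⟨c, hc, hcT⟩ := Finset.exists_of_ssubset hT
  rw [path5_eq_toFinset, List.mem_toFinset] at hc
  obtain ⟨htop, hclosed, hbottom⟩ := path5Chain_takeWhile_separates c hc
  obtain ⟨-, p, hp⟩ := isWinningConnection_iff.1 hwin
  refine not_isCrossing_of_closed (S := {a | a ∈ path5Chain ∧ a ≠ c})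
    {a | a ∈ path5Chain.takeWhile (· ≠ c)} (fun a ha => htop a ha.1 ha.2)
    (fun a ha b hb => hclosed a ha b hb.1 hb.2) hbottom p (hp.mono fun a ha => ⟨?_, ?_⟩)
  · exact List.mem_toFinset.1 (path5_eq_toFinset ▸ hT.1 ha)
  · rintro rfl
    exact hcT ha

theorem optimal_path_5 :
    IsWinningPath 5 path5 ∧ path5.card = 11 ∧
    ∀ T : Finset (ℤ × ℤ), IsWinningPath 5 T → T.card ≤ 11 :=
  ⟨⟨isWinningConnection_iff.2 ⟨by decide, _, isCrossing_path5Chain⟩, path5_minimal⟩, by decide,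
    fun _ hT => hT.card_le maxExtension_five_lt⟩
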